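/- Let ν : [1,n] → [1,ñ] be strictly increasing, extended to ν : ℤ → ℤ by ν(p) := k_n(p)·ñ + ν(r_n(p)). Let B_n(x,y) := Σ_{k>0} (S_n^k(x), y) on P = ⊕_{a∈ℤ} ℤε_a, where S_n(ε_a) = ε_{a+n} and (ε_a, ε_b) = δ_{a,b}. Then for the induced map ν_* : P → P given by ν_*(ε_a) = ε_{ν(a)}, we have B_ñ(ν_*(x), ν_*(y)) = B_n(x, y) for all x, y ∈ P. -/
import Mathlib


/-- `r_n(p)`: the unique element of `[1,n]` with `p ≡ r_n(p) mod n`. -/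
def rmod (n p : ℤ) : ℤ := (p - 1) % n + 1

/-- `k_n(p)`: the unique integer with `p = k_n(p)·n + r_n(p)`, `r_n(p) ∈ [1,n]`. -/
def kdiv (n p : ℤ) : ℤ := (p - 1) / n

/-- The extension to `ℤ` of a function `ν : [1,n] → [1,ñ]`:
`ν(p) := k_n(p)·ñ + ν(r_n(p))`. -/
def extFun (n nt : ℤ) (ν : ℤ → ℤ) (p : ℤ) : ℤ := kdiv n p * nt + ν (rmod n p)

/-- The standard pairing on `P = ⊕_{a∈ℤ} ℤε_a` with `(ε_a,ε_b) = δ_{a,b}`. -/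
def pairP (x y : ℤ →₀ ℤ) : ℤ := x.sum fun a xa => xa * y a

/-- The shift automorphism `S_m : ε_a ↦ ε_{a+m}` of `P`. -/
noncomputable def shiftP (m : ℤ) (x : ℤ →₀ ℤ) : ℤ →₀ ℤ := Finsupp.mapDomain (· + m) x

/-- The bilinear form `B_m(x,y) := Σ_{k>0} (S_m^k(x), y)` (a finite sum, as elements of `P`
have finite support). -/
noncomputable def BForm (m : ℤ) (x y : ℤ →₀ ℤ) : ℤ :=
  ∑' k : ℕ, pairP (shiftP (m * ((k : ℤ) + 1)) x) y

lemma rmod_bounds (n p : ℤ) (hn : 0 < n) : 1 ≤ rmod n p ∧ rmod n p ≤ n := by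
  unfold rmod
  have h1 := Int.emod_nonneg (p - 1) hn.ne'
  have h2 := Int.emod_lt_of_pos (p - 1) hn
  omega

lemma kdiv_rmod_spec (n p : ℤ) : p = kdiv n p * n + rmod n p := by
  unfold kdiv rmod
  linarith [Int.mul_ediv_add_emod (p - 1) n, mul_comm ((p - 1) / n) n]

lemma kdiv_rmod_unique (n p k r : ℤ) (hn : 0 < n) (h : p = k * n + r)
    (h1 : 1 ≤ r) (h2 : r ≤ n) : kdiv n p = k ∧ rmod n p = r := by
  have hp : p - 1 = r - 1 + n * k := by subst h; ring
  have hd : (r - 1) / n = 0 := Int.ediv_eq_zero_of_lt (by omega) (by omega)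
  have hm : (r - 1) % n = r - 1 := Int.emod_eq_of_lt (by omega) (by omega)
  constructor
  · unfold kdiv
    rw [hp, Int.add_mul_ediv_left _ _ hn.ne', hd, zero_add]
  · unfold rmod
    rw [hp, Int.add_mul_emod_self_left, hm]
    omega

lemma extFun_add_mul (n nt : ℤ) (hn : 0 < n) (ν : ℤ → ℤ) (p k : ℤ) :
    extFun n nt ν (p + n * k) = extFun n nt ν p + k * nt := by
  obtain ⟨hr1, hr2⟩ := rmod_bounds n p hn
  have hspec := kdiv_rmod_spec n p
  obtain ⟨hk, hr⟩ := kdiv_rmod_unique n (p + n * k) (kdiv n p + k) (rmod n p) hn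
    (by linear_combination hspec) hr1 hr2
  unfold extFun
  rw [hk, hr]; ring

lemma extFun_strictMono (n nt : ℤ) (hn : 1 < n) (hnnt : n < nt) (ν : ℤ → ℤ)
    (hmap : ∀ i, 1 ≤ i → i ≤ n → 1 ≤ ν i ∧ ν i ≤ nt)
    (hmono : ∀ i j, 1 ≤ i → i < j → j ≤ n → ν i < ν j) :
    StrictMono (extFun n nt ν) := by
  apply strictMono_int_of_lt_succ
  intro p
  have hn0 : (0:ℤ) < n := by omega
  obtain ⟨hr1, hr2⟩ := rmod_bounds n p hn0
  have hspec := kdiv_rmod_spec n p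
  rcases lt_or_eq_of_le hr2 with hlt | heq
  · -- rmod n p < n : next value has same kdiv, rmod + 1
    obtain ⟨hk, hr⟩ := kdiv_rmod_unique n (p + 1) (kdiv n p) (rmod n p + 1) hn0
      (by omega) (by omega) (by omega)
    unfold extFun
    rw [hk, hr]
    have := hmono (rmod n p) (rmod n p + 1) hr1 (by omega) (by omega)
    omega
  · -- rmod n p = n : next value has kdiv + 1, rmod = 1
    obtain ⟨hk, hr⟩ := kdiv_rmod_unique n (p + 1) (kdiv n p + 1) 1 hn0
      (by rw [heq] at hspec; linear_combination hspec) (by omega) (by omega)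
    unfold extFun
    rw [hk, hr]
    have h1 := (hmap 1 le_rfl (by omega)).1
    have h2 := (hmap (rmod n p) hr1 hr2).2
    nlinarith

lemma pairP_mapDomain (f : ℤ → ℤ) (hf : Function.Injective f) (x y : ℤ →₀ ℤ) :
    pairP (Finsupp.mapDomain f x) (Finsupp.mapDomain f y) = pairP x y := by
  unfold pairP
  rw [Finsupp.sum_mapDomain_index (by intro b; ring) (by intro b m₁ m₂; ring)]
  apply Finsupp.sum_congr
  intro a _
  rw [Finsupp.mapDomain_apply hf]

/-- The map `ν_* : P → P`, `ε_a ↦ ε_{ν(a)}`, induced by the extension to `ℤ` of a strictly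
increasing function `ν : [1,n] → [1,ñ]`, intertwines the forms: `B_ñ(ν_*x, ν_*y) = B_n(x,y)`. -/
theorem stmt8 (n nt : ℤ) (hn : 1 < n) (hnnt : n < nt) (ν : ℤ → ℤ)
    (hmap : ∀ i, 1 ≤ i → i ≤ n → 1 ≤ ν i ∧ ν i ≤ nt)
    (hmono : ∀ i j, 1 ≤ i → i < j → j ≤ n → ν i < ν j)
    (x y : ℤ →₀ ℤ) :
    BForm nt (Finsupp.mapDomain (extFun n nt ν) x) (Finsupp.mapDomain (extFun n nt ν) y) =
      BForm n x y := by
  have hinj : Function.Injective (extFun n nt ν) :=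
    (extFun_strictMono n nt hn hnnt ν hmap hmono).injective
  unfold BForm
  apply tsum_congr
  intro k
  have hsh : shiftP (nt * ((k : ℤ) + 1)) (Finsupp.mapDomain (extFun n nt ν) x)
      = Finsupp.mapDomain (extFun n nt ν) (shiftP (n * ((k : ℤ) + 1)) x) := by
    unfold shiftP
    rw [← Finsupp.mapDomain_comp, ← Finsupp.mapDomain_comp]
    congr 1
    funext a
    simp only [Function.comp_apply]
    have := extFun_add_mul n nt (by omega) ν a ((k : ℤ) + 1)
    linarith
  rw [hsh, pairP_mapDomain _ hinj]
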